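/- For all bimoulds A, B, C such that A(∅) = 0, one has swamu(mu(A,B), C) = mu(swamu(A,C), B). -/

import Mathlib

/-- A bimould: a function assigning to every finite sequence of pairs `(u, v)` of
elements of `K` an element of `R`. -/
abbrev Bimould (K R : Type*) := List (K × K) → R

variable {K R : Type*} [CommRing K] [CommRing R]

/-- The (non-commutative) mould product `mu`:
`mu(A,B)(w) = Σ_{w = a·b} A(a) B(b)` over all prefix/suffix decompositions of `w`. -/
def mu (A B : Bimould K R) : Bimould K R :=
  fun w => ∑ i ∈ Finset.range (w.length + 1), A (w.take i) * B (w.drop i)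

/-- The sequence transformation underlying `swap`: for `w = ((u_1,v_1),…,(u_r,v_r))` it
returns `((v_r, u_1+⋯+u_r), (v_{r-1}-v_r, u_1+⋯+u_{r-1}), …, (v_1-v_2, u_1))`. -/
def swapSeq (w : List (K × K)) : List (K × K) :=
  List.ofFn fun i : Fin w.length =>
    ((w.getD (w.length - 1 - (i : ℕ)) (0, 0)).2 - (w.getD (w.length - (i : ℕ)) (0, 0)).2,
      ((w.take (w.length - (i : ℕ))).map Prod.fst).sum)

/-- The involution `swap`. -/
def swap (A : Bimould K R) : Bimould K R := fun w => A (swapSeq w)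

/-- The involution `anti`, reversing the sequence of letters. -/
def anti (A : Bimould K R) : Bimould K R := fun w => A w.reverse

/-- `swamu`, the `swap`-conjugation of `mu`. -/
def swamu (A B : Bimould K R) : Bimould K R := swap (mu (swap A) (swap B))

/-- `answamu`, the `swap ∘ anti`-conjugation of `mu`. -/
def answamu (A B : Bimould K R) : Bimould K R :=
  anti (swap (mu (swap (anti A)) (swap (anti B))))

/-! Conjugated by `swap`, the product `mu` becomes a sum over factorizations `w = a·b` of
`A(⌈a⌉b) · B(a⌉)`, where `⌈a⌉b = shiftHeadFst (sumFst a) b` adds the `u`-sum of `a` to the first `u`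
of `b` and `a⌉ = shiftSnd (-headSnd b) a` subtracts the first `v` of `b` from every `v` of `a`. This
comes from the behaviour of `swap` on a concatenation and from `swap` being an involution. In
`swamu (mu A B) C` the flexion `⌈a⌉` only touches the first letter of the `A`-factor of `mu A B`,
up to the term `A(∅)`, which vanishes; so both sides of the identity are the sum of
`A(⌈a⌉b) C(a⌉) B(c)` over all factorizations `w = a·b·c`. -/

section Flexion

variable {M : Type*} [AddCommMonoid M]

def sumFst (l : List (M × M)) : M := (l.map Prod.fst).sum

def headSnd (l : List (M × M)) : M := (l.headD 0).2

def shiftHeadFst (c : M) (l : List (M × M)) : List (M × M) := l.modifyHead (Prod.map (c + ·) id)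

def shiftSnd (c : M) (l : List (M × M)) : List (M × M) := l.map (Prod.map id (· + c))

@[simp] lemma sumFst_nil : sumFst ([] : List (M × M)) = 0 := rfl

@[simp] lemma sumFst_cons (x : M × M) (l : List (M × M)) : sumFst (x :: l) = x.1 + sumFst l := by
  simp [sumFst]

@[simp] lemma sumFst_append (l m : List (M × M)) : sumFst (l ++ m) = sumFst l + sumFst m := by
  simp [sumFst]

@[simp] lemma sumFst_shiftSnd (c : M) (l : List (M × M)) : sumFst (shiftSnd c l) = sumFst l := by
  simp [sumFst, shiftSnd, Function.comp_def]

@[simp] lemma headSnd_nil : headSnd ([] : List (M × M)) = 0 := rfl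

@[simp] lemma headSnd_cons (x : M × M) (l : List (M × M)) : headSnd (x :: l) = x.2 := rfl

lemma headSnd_append {l : List (M × M)} (hl : l ≠ []) (m : List (M × M)) :
    headSnd (l ++ m) = headSnd l := by
  obtain ⟨x, l, rfl⟩ := List.exists_cons_of_ne_nil hl
  rfl

lemma headSnd_take {m : ℕ} (hm : 0 < m) (l : List (M × M)) : headSnd (l.take m) = headSnd l := by
  obtain ⟨m, rfl⟩ := Nat.exists_eq_add_of_lt hm
  cases l <;> rfl

@[simp] lemma shiftHeadFst_nil (c : M) : shiftHeadFst c [] = [] := rfl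

@[simp] lemma shiftHeadFst_cons (c : M) (x : M × M) (l : List (M × M)) :
    shiftHeadFst c (x :: l) = (c + x.1, x.2) :: l := rfl

@[simp] lemma shiftHeadFst_zero (l : List (M × M)) : shiftHeadFst 0 l = l := by
  cases l <;> simp

@[simp] lemma shiftHeadFst_shiftHeadFst (a b : M) (l : List (M × M)) :
    shiftHeadFst a (shiftHeadFst b l) = shiftHeadFst (a + b) l := by
  cases l <;> simp [add_assoc]

lemma shiftHeadFst_append {l : List (M × M)} (hl : l ≠ []) (c : M) (m : List (M × M)) :
    shiftHeadFst c (l ++ m) = shiftHeadFst c l ++ m := by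
  obtain ⟨x, l, rfl⟩ := List.exists_cons_of_ne_nil hl
  rfl

@[simp] lemma shiftSnd_nil (c : M) : shiftSnd c [] = [] := rfl

@[simp] lemma shiftSnd_cons (c : M) (x : M × M) (l : List (M × M)) :
    shiftSnd c (x :: l) = (x.1, x.2 + c) :: shiftSnd c l := rfl

@[simp] lemma shiftSnd_append (c : M) (l m : List (M × M)) :
    shiftSnd c (l ++ m) = shiftSnd c l ++ shiftSnd c m := List.map_append

@[simp] lemma shiftSnd_eq_nil_iff (c : M) (l : List (M × M)) : shiftSnd c l = [] ↔ l = [] :=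
  List.map_eq_nil_iff

lemma shiftHeadFst_shiftSnd (a b : M) (l : List (M × M)) :
    shiftHeadFst a (shiftSnd b l) = shiftSnd b (shiftHeadFst a l) := by
  cases l <;> simp

end Flexion

@[simp] lemma length_swapSeq (w : List (K × K)) : (swapSeq w).length = w.length := by
  simp [swapSeq]

@[simp] lemma swapSeq_nil : swapSeq ([] : List (K × K)) = [] := rfl

lemma getElem_swapSeq (w : List (K × K)) (j : ℕ) (hj : j < (swapSeq w).length) :
    (swapSeq w)[j] = ((w.getD (w.length - 1 - j) 0).2 - (w.getD (w.length - j) 0).2,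
      sumFst (w.take (w.length - j))) := by
  simp [swapSeq, sumFst, Prod.mk_zero_zero]

lemma swapSeq_concat (w : List (K × K)) (x : K × K) :
    swapSeq (w ++ [x]) = (x.2, sumFst w + x.1) :: shiftHeadFst (-x.2) (swapSeq w) := by
  refine List.ext_getElem (by simp [shiftHeadFst]) ?_
  rintro (_ | _ | k) h₁ -
  · simp [getElem_swapSeq, sumFst]
  · have hw : 0 < w.length := by simpa using h₁
    simp only [getElem_swapSeq, List.getElem_cons_succ, shiftHeadFst,
      List.getElem_modifyHead_zero, List.length_append, List.length_singleton]
    rw [List.getD_append _ _ _ _ (by omega), List.getD_append_right _ _ _ _ (by omega)]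
    simp [sub_eq_neg_add]
  · have hk : k + 1 < w.length := by simpa using h₁
    simp only [getElem_swapSeq, List.getElem_cons_succ, shiftHeadFst,
      List.getElem_modifyHead_succ, List.length_append, List.length_singleton]
    rw [List.getD_append _ _ _ _ (by omega), List.getD_append _ _ _ _ (by omega),
      List.take_append_of_le_length (by omega),
      show w.length + 1 - (k + 1 + 1) = w.length - (k + 1) by omega,
      show w.length + 1 - 1 - (k + 1 + 1) = w.length - 1 - (k + 1) by omega]

@[simp] lemma swapSeq_singleton (x : K × K) : swapSeq [x] = [(x.2, x.1)] := by
  simpa using swapSeq_concat [] x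

lemma swapSeq_shiftSnd (c : K) (w : List (K × K)) :
    swapSeq (shiftSnd c w) = shiftHeadFst c (swapSeq w) := by
  induction w using List.reverseRecOn with
  | nil => rfl
  | append_singleton w x ih =>
    rw [shiftSnd_append, shiftSnd_cons, shiftSnd_nil, swapSeq_concat, swapSeq_concat, ih]
    simp [add_comm]

lemma swapSeq_append (a b : List (K × K)) :
    swapSeq (a ++ b) =
      shiftSnd (sumFst a) (swapSeq b) ++ shiftHeadFst (-headSnd b) (swapSeq a) := by
  induction b using List.reverseRecOn with
  | nil => simp
  | append_singleton b x ih =>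
    rw [← List.append_assoc, swapSeq_concat, ih, swapSeq_concat]
    rcases eq_or_ne b [] with rfl | hb
    · simp [add_comm]
    · have hsb : shiftSnd (sumFst a) (swapSeq b) ≠ [] := by
        simpa [← List.length_pos_iff] using hb
      rw [shiftHeadFst_append hsb, headSnd_append hb, shiftHeadFst_shiftSnd]
      simp [add_comm, add_left_comm]

lemma swapSeq_cons (y : K × K) (l : List (K × K)) :
    swapSeq (y :: l) = shiftSnd y.1 (swapSeq l) ++ [(-headSnd l + y.2, y.1)] := by
  simpa using swapSeq_append [y] l

lemma sumFst_swapSeq (w : List (K × K)) : sumFst (swapSeq w) = headSnd w := by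
  induction w with
  | nil => rfl
  | cons y l ih => simp [swapSeq_cons, ih]

@[simp] lemma swapSeq_swapSeq (w : List (K × K)) : swapSeq (swapSeq w) = w := by
  induction w with
  | nil => rfl
  | cons y l ih => simp [swapSeq_cons, swapSeq_concat, swapSeq_shiftSnd, sumFst_swapSeq, ih]

lemma swapSeq_shiftHeadFst (c : K) (w : List (K × K)) :
    swapSeq (shiftHeadFst c w) = shiftSnd c (swapSeq w) := by
  rw [← swapSeq_swapSeq (shiftSnd c _), swapSeq_shiftSnd, swapSeq_swapSeq]

lemma swapSeq_take_swapSeq_append (a b : List (K × K)) :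
    swapSeq ((swapSeq (a ++ b)).take b.length) = shiftHeadFst (sumFst a) b := by
  rw [swapSeq_append, List.take_left' (by simp [shiftSnd]), swapSeq_shiftSnd, swapSeq_swapSeq]

lemma swapSeq_drop_swapSeq_append (a b : List (K × K)) :
    swapSeq ((swapSeq (a ++ b)).drop b.length) = shiftSnd (-headSnd b) a := by
  rw [swapSeq_append, List.drop_left' (by simp [shiftSnd]), swapSeq_shiftHeadFst, swapSeq_swapSeq]

open Finset

lemma swamu_apply (A B : Bimould K R) (w : List (K × K)) :
    swamu A B w = ∑ k ∈ range (w.length + 1),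
      A (shiftHeadFst (sumFst (w.take k)) (w.drop k)) *
        B (shiftSnd (-headSnd (w.drop k)) (w.take k)) := by
  rw [swamu, swap, mu, length_swapSeq, ← sum_range_reflect]
  refine sum_congr rfl fun k _ => ?_
  have htake := swapSeq_take_swapSeq_append (w.take k) (w.drop k)
  have hdrop := swapSeq_drop_swapSeq_append (w.take k) (w.drop k)
  rw [List.take_append_drop, List.length_drop] at htake hdrop
  simp only [swap, Nat.add_sub_cancel, htake, hdrop]

lemma mu_shiftHeadFst {A : Bimould K R} (hA : A [] = 0) (B : Bimould K R) (c : K)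
    (l : List (K × K)) : mu A B (shiftHeadFst c l) = mu (fun x => A (shiftHeadFst c x)) B l := by
  simp only [mu, shiftHeadFst, List.length_modifyHead]
  refine sum_congr rfl fun j _ => ?_
  rcases j with _ | j
  · simp [hA]
  · rw [List.take_modifyHead, List.drop_modifyHead_of_pos j.succ_pos]

/-- For bimoulds `A, B, C` with `A(∅) = 0`, `swamu(mu(A,B), C) = mu(swamu(A,C), B)`. -/
theorem stmt_6 (A B C : Bimould K R) (hA : A [] = 0) :
    swamu (mu A B) C = mu (swamu A C) B := by
  funext w
  -- the term of the factorization `w = a·b·c` with `|a| = k` and `|a·b| = m`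
  let F k m := A (shiftHeadFst (sumFst (w.take k)) ((w.drop k).take (m - k))) *
    C (shiftSnd (-headSnd (w.drop k)) (w.take k)) * B (w.drop m)
  calc swamu (mu A B) C w = ∑ k ∈ range (w.length + 1), ∑ m ∈ Ico k (w.length + 1), F k m := by
        rw [swamu_apply]
        refine sum_congr rfl fun k hk => ?_
        rw [mu_shiftHeadFst hA, mu, sum_mul, sum_Ico_eq_sum_range, List.length_drop,
          ← Nat.sub_add_comm (Nat.lt_succ_iff.mp (mem_range.mp hk))]
        refine sum_congr rfl fun j _ => ?_
        simp only [F, Nat.add_sub_cancel_left, List.drop_drop]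
        ring
    _ = ∑ m ∈ range (w.length + 1), ∑ k ∈ range (m + 1), F k m := by
        simpa using sum_Ico_Ico_comm 0 (w.length + 1) F
    _ = mu (swamu A C) B w := by
        refine sum_congr rfl fun m hm => ?_
        rw [swamu_apply, sum_mul, List.length_take, min_eq_left (by simpa [Nat.lt_succ_iff] using hm)]
        refine sum_congr rfl fun k hk => ?_
        rcases (Nat.lt_succ_iff.mp (mem_range.mp hk)).lt_or_eq with hkm | rfl
        · simp only [F, List.take_take, List.drop_take, headSnd_take (Nat.sub_pos_of_lt hkm),
            min_eq_left hkm.le]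
        · simp [F, hA]
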